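/- Let E = [t]ₓ R be an essential matrix with R ∈ SO(3), t ∈ ℝ³, and let τ = tr R. Then (1/2)(τ² − 1) tr(E Eᵀ) + (τ + 1) tr(E²) − τ (tr E)² = 0. -/

import Mathlib

/-!
Write `E = [t]ₓ R`, `n = t ⬝ t` and `q = t ⬝ R t`. Orthogonality gives `tr (E Eᵀ) = tr ([t]ₓ [t]ₓᵀ) = 2 n`.
For a `3 × 3` matrix `(tr E)² = tr (E²) + 2 tr (adj E)`, and `adj E = adj R · adj [t]ₓ = Rᵀ t tᵀ`,
so `tr (adj E) = q`. On the other hand `tr E = -t ⬝ a` where `[a]ₓ = R - Rᵀ`, and the Cayley–Hamilton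
relation `R³ - τ R² + τ R - 1 = 0` of a rotation yields `a aᵀ = (τ + 1)(R + Rᵀ) - (τ² - 1) I`, hence
`(tr E)² = 2 (τ + 1) q - (τ² - 1) n`. Substituting these three facts, the expression vanishes identically.
-/

open Matrix Real

def skew (v : Fin 3 → ℝ) : Matrix (Fin 3) (Fin 3) ℝ :=
  !![0, -v 2, v 1; v 2, 0, -v 0; -v 1, v 0, 0]

def quatRot (σ : ℝ) (u : Fin 3 → ℝ) : Matrix (Fin 3) (Fin 3) ℝ :=
  (2 : ℝ) • (vecMulVec u u - σ • skew u) + (σ ^ 2 - u ⬝ᵥ u) • (1 : Matrix (Fin 3) (Fin 3) ℝ)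

noncomputable def rodrigues (θ : ℝ) (r : Fin 3 → ℝ) : Matrix (Fin 3) (Fin 3) ℝ :=
  Real.cos θ • (1 : Matrix (Fin 3) (Fin 3) ℝ) + Real.sin θ • skew r
    + (1 - Real.cos θ) • vecMulVec r r

def axial {α : Type*} [Sub α] (M : Matrix (Fin 3) (Fin 3) α) : Fin 3 → α :=
  ![M 2 1 - M 1 2, M 0 2 - M 2 0, M 1 0 - M 0 1]

section CommRing

variable {α : Type*} [CommRing α]

theorem Matrix.trace_sq_fin_three (A : Matrix (Fin 3) (Fin 3) α) :
    A.trace ^ 2 = (A * A).trace + 2 * A.adjugate.trace := by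
  simp only [trace_fin_three, adjugate_fin_three, mul_apply, Fin.sum_univ_three, of_apply, cons_val',
    cons_val_zero, cons_val_one, cons_val, cons_val_fin_one]
  ring

theorem Matrix.cayley_hamilton_fin_three (A : Matrix (Fin 3) (Fin 3) α) :
    A * A * A - A.trace • (A * A) + A.adjugate.trace • A - A.det • (1 : Matrix (Fin 3) (Fin 3) α)
      = 0 := by
  ext i j
  fin_cases i <;> fin_cases j <;>
    simp [trace_fin_three, adjugate_fin_three, det_fin_three, mul_apply, Fin.sum_univ_three] <;>
    ring

theorem dotProduct_transpose_mulVec_self (R : Matrix (Fin 3) (Fin 3) α) (t : Fin 3 → α) :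
    t ⬝ᵥ (Rᵀ *ᵥ t) = t ⬝ᵥ (R *ᵥ t) := by
  rw [mulVec_transpose, dotProduct_comm, dotProduct_mulVec]

variable {R : Matrix (Fin 3) (Fin 3) α}

theorem adjugate_eq_transpose_of_special_orthogonal (hR : Rᵀ * R = 1) (hdet : R.det = 1) :
    R.adjugate = Rᵀ :=
  calc R.adjugate = R.adjugate * (R * Rᵀ) := by rw [mul_eq_one_comm.mp hR, mul_one]
    _ = Rᵀ := by rw [← mul_assoc, adjugate_mul, hdet, one_smul, one_mul]

theorem mul_self_eq_of_special_orthogonal (hR : Rᵀ * R = 1) (hdet : R.det = 1) :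
    R * R = R.trace • R - R.trace • (1 : Matrix (Fin 3) (Fin 3) α) + Rᵀ := by
  have hCH := congrArg (· * Rᵀ) (cayley_hamilton_fin_three R)
  simp only [adjugate_eq_transpose_of_special_orthogonal hR hdet, trace_transpose, hdet, one_smul,
    sub_mul, add_mul, smul_mul, mul_assoc, mul_eq_one_comm.mp hR, mul_one, one_mul,
    zero_mul] at hCH
  rw [← sub_eq_zero, ← hCH]
  abel

theorem sub_transpose_mul_self_of_special_orthogonal (hR : Rᵀ * R = 1) (hdet : R.det = 1) :
    (R - Rᵀ) * (R - Rᵀ)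
      = (R.trace + 1) • (R + Rᵀ) - (2 * (R.trace + 1)) • (1 : Matrix (Fin 3) (Fin 3) α) := by
  have hRR := mul_self_eq_of_special_orthogonal hR hdet
  have hRtRt : Rᵀ * Rᵀ = R.trace • Rᵀ - R.trace • (1 : Matrix (Fin 3) (Fin 3) α) + R := by
    simpa [transpose_mul, trace_transpose] using congrArg transpose hRR
  calc (R - Rᵀ) * (R - Rᵀ) = R * R + Rᵀ * Rᵀ - R * Rᵀ - Rᵀ * R := by noncomm_ring
    _ = _ := by rw [hRR, hRtRt, hR, mul_eq_one_comm.mp hR]; module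

end CommRing

theorem skew_axial (M : Matrix (Fin 3) (Fin 3) ℝ) : skew (axial M) = M - Mᵀ := by
  ext i j
  fin_cases i <;> fin_cases j <;> simp [skew, axial]

theorem skew_mul_skew (u v : Fin 3 → ℝ) : skew u * skew v = vecMulVec v u - (u ⬝ᵥ v) • 1 := by
  ext i j
  fin_cases i <;> fin_cases j <;>
    simp [skew, mul_apply, Fin.sum_univ_three, vecMulVec_apply, dotProduct] <;> ring

theorem trace_skew_mul (t : Fin 3 → ℝ) (M : Matrix (Fin 3) (Fin 3) ℝ) :
    (skew t * M).trace = -(t ⬝ᵥ axial M) := by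
  simp only [trace_fin_three, mul_apply, Fin.sum_univ_three, dotProduct, skew, axial, of_apply,
    cons_val', cons_val_zero, cons_val_one, cons_val, cons_val_fin_one]
  ring

theorem trace_skew_mul_transpose_skew (t : Fin 3 → ℝ) :
    (skew t * (skew t)ᵀ).trace = 2 * (t ⬝ᵥ t) := by
  simp only [trace_fin_three, mul_apply, Fin.sum_univ_three, dotProduct, transpose_apply, skew,
    of_apply, cons_val', cons_val_zero, cons_val_one, cons_val, cons_val_fin_one]
  ring

theorem adjugate_skew (t : Fin 3 → ℝ) : (skew t).adjugate = vecMulVec t t := by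
  ext i j
  fin_cases i <;> fin_cases j <;> simp [skew, adjugate_fin_three, vecMulVec_apply] <;> ring

section SpecialOrthogonal

variable {R : Matrix (Fin 3) (Fin 3) ℝ}

theorem vecMulVec_axial_of_special_orthogonal (hR : Rᵀ * R = 1) (hdet : R.det = 1) :
    vecMulVec (axial R) (axial R)
      = (R.trace + 1) • (R + Rᵀ) - (R.trace ^ 2 - 1) • (1 : Matrix (Fin 3) (Fin 3) ℝ) := by
  set a := axial R
  have hsq : vecMulVec a a - (a ⬝ᵥ a) • 1
      = (R.trace + 1) • (R + Rᵀ) - (2 * (R.trace + 1)) • 1 := by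
    rw [← skew_mul_skew, skew_axial, sub_transpose_mul_self_of_special_orthogonal hR hdet]
  have hnorm : a ⬝ᵥ a = (R.trace + 1) * (3 - R.trace) := by
    have htr := congrArg trace hsq
    simp only [trace_sub, trace_add, trace_smul, trace_vecMulVec, trace_transpose, trace_one,
      Fintype.card_fin, smul_eq_mul] at htr
    linear_combination -htr / 2
  rw [sub_eq_iff_eq_add.mp hsq, hnorm]
  module

theorem dotProduct_axial_sq_of_special_orthogonal (hR : Rᵀ * R = 1) (hdet : R.det = 1)
    (t : Fin 3 → ℝ) :
    (t ⬝ᵥ axial R) ^ 2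
      = 2 * (R.trace + 1) * (t ⬝ᵥ (R *ᵥ t)) - (R.trace ^ 2 - 1) * (t ⬝ᵥ t) := by
  have h := congrArg (fun M => t ⬝ᵥ (M *ᵥ t)) (vecMulVec_axial_of_special_orthogonal hR hdet)
  simp only [vecMulVec_mulVec, sub_mulVec, add_mulVec, smul_mulVec, one_mulVec, dotProduct_sub,
    dotProduct_add, dotProduct_smul, dotProduct_transpose_mulVec_self, smul_eq_mul,
    op_smul_eq_smul] at h
  rw [dotProduct_comm (axial R) t] at h
  linear_combination h

theorem trace_adjugate_skew_mul_of_special_orthogonal (hR : Rᵀ * R = 1) (hdet : R.det = 1)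
    (t : Fin 3 → ℝ) :
    (skew t * R).adjugate.trace = t ⬝ᵥ (R *ᵥ t) := by
  rw [adjugate_mul_distrib, adjugate_eq_transpose_of_special_orthogonal hR hdet, adjugate_skew,
    mul_vecMulVec, trace_vecMulVec, dotProduct_comm, dotProduct_transpose_mulVec_self]

end SpecialOrthogonal

theorem essential_angle_constraint (R : Matrix (Fin 3) (Fin 3) ℝ) (t : Fin 3 → ℝ)
    (hR : Rᵀ * R = 1) (hRdet : R.det = 1) :
    let E := skew t * R
    let τ := R.trace
    (1 / 2 : ℝ) * (τ ^ 2 - 1) * (E * Eᵀ).trace + (τ + 1) * (E * E).trace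
      - τ * E.trace ^ 2 = 0 := by
  intro E τ
  have hEEt : (E * Eᵀ).trace = 2 * (t ⬝ᵥ t) := by
    rw [← trace_skew_mul_transpose_skew, transpose_mul, mul_assoc, ← mul_assoc R,
      mul_eq_one_comm.mp hR, one_mul]
  have hsq_adj : E.trace ^ 2 = (E * E).trace + 2 * (t ⬝ᵥ (R *ᵥ t)) := by
    rw [trace_sq_fin_three, trace_adjugate_skew_mul_of_special_orthogonal hR hRdet]
  have hsq_axial : E.trace ^ 2 = 2 * (τ + 1) * (t ⬝ᵥ (R *ᵥ t)) - (τ ^ 2 - 1) * (t ⬝ᵥ t) := by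
    rw [trace_skew_mul, neg_sq, dotProduct_axial_sq_of_special_orthogonal hR hRdet]
  linear_combination (τ ^ 2 - 1) / 2 * hEEt - (τ + 1) * hsq_adj + hsq_axial
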